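/- arXiv:1510.07324 — 2 statements merged into one kernel-verified Lean document; each statement's English description precedes it below -/
import Mathlib

section
/- Let (I, d, l, A, (R_ι)) and (I, d, l, B, (S_ι)) be two sets of finite gauged poly-log-homogeneous data over dimension D sharing the same index set, degrees and logarithmic orders, with associated ζ-functions ζ₁ and ζ₂ and critical set I₀. Assume R_ι(0) = S_ι(0) for every ι ∈ I₀. Then there exists ε > 0 such that for every z with 0 < |z| < ε: ζ₁(z) − ζ₂(z) = Σ_{ι∈I₀} Σ_{n=1}^{l_ι} (−1)^{l_ι+1} l_ι! · (R_ι − S_ι)^{(n)}(0)/n! · z^{n−l_ι−1} + Σ_{n=0}^{∞} e_n z^n, the power series converging absolutely, where e_n = (A−B)^{(n)}(0)/n! + Σ_{ι∈I∖I₀} Σ_{j=0}^{n} (−1)^{l_ι+j+1} · ((l_ι+j)!/j!) · (D + d_ι + 1)^{−(l_ι+j+1)} · (R_ι − S_ι)^{(n−j)}(0)/(n−j)! + Σ_{ι∈I₀} (−1)^{l_ι+1} l_ι! · (R_ι − S_ι)^{(n+l_ι+1)}(0)/(n+l_ι+1)!. -/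
open scoped Classical

/-- The ζ-function associated to finite gauged poly-log-homogeneous data
`(I, d, l, A, (R_ι))` over dimension `D`:
`ζ(z) = A(z) + Σ_ι (−1)^{l_ι+1} l_ι! (D + d_ι + z + 1)^{−(l_ι+1)} R_ι(z)`. -/
noncomputable def zetaFn {I : Type*} [Fintype I] (D : ℕ) (d : I → ℂ) (l : I → ℕ)
    (A : ℂ → ℂ) (R : I → ℂ → ℂ) (z : ℂ) : ℂ :=
  A z + ∑ i, (-1 : ℂ) ^ (l i + 1) * (Nat.factorial (l i) : ℂ) *
    ((D : ℂ) + d i + z + 1) ^ (-(l i + 1 : ℤ)) * R i z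

/-- The critical index set `I₀ = {ι : d_ι = −D−1}`. -/
noncomputable def critSet {I : Type*} [Fintype I] (D : ℕ) (d : I → ℂ) : Finset I :=
  Finset.univ.filter fun i => d i = -(D : ℂ) - 1

/-- The coefficient `e_n` of `z^n` in the regular part of the Laurent expansion, formed
from data `(A, (R_ι))` (used below with the differences `A−B` and `R_ι−S_ι`). -/
noncomputable def laurentCoeff {I : Type*} [Fintype I] (D : ℕ) (d : I → ℂ) (l : I → ℕ)
    (A : ℂ → ℂ) (R : I → ℂ → ℂ) (n : ℕ) : ℂ :=
  iteratedDeriv n A 0 / (Nat.factorial n : ℂ) +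
    (∑ i ∈ Finset.univ \ critSet D d, ∑ j ∈ Finset.range (n + 1),
      (-1 : ℂ) ^ (l i + j + 1) * ((Nat.factorial (l i + j) : ℂ) / (Nat.factorial j : ℂ)) *
        ((D : ℂ) + d i + 1) ^ (-(l i + j + 1 : ℤ)) *
        (iteratedDeriv (n - j) (R i) 0 / (Nat.factorial (n - j) : ℂ))) +
    ∑ i ∈ critSet D d, (-1 : ℂ) ^ (l i + 1) * (Nat.factorial (l i) : ℂ) *
      (iteratedDeriv (n + l i + 1) (R i) 0 / (Nat.factorial (n + l i + 1) : ℂ))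

/-! Near `0`, every term of `ζ₁ - ζ₂` is expanded as an absolutely convergent series. The
regular part `A - B` is its Taylor series. For a non-critical index, `(D + d_ι + 1 + z)^{-(l_ι+1)}`
is analytic at `0` and given by the negative binomial series, which is multiplied with the Taylor
series of `R_ι - S_ι` by the Cauchy product. For a critical index `D + d_ι + z + 1 = z`, so the
term is `z^{-(l_ι+1)}` times the Taylor series of `R_ι - S_ι`, whose constant term vanishes since
`R_ι(0) = S_ι(0)`: the powers `z^{n-l_ι-1}` with `1 ≤ n ≤ l_ι` form the principal part, the
others the regular part. -/

open Filter Topology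

section HasAbsSum

variable {β E : Type*} [SeminormedAddCommGroup E]

def HasAbsSum (f : β → E) (x : E) : Prop :=
  Summable (fun b => ‖f b‖) ∧ HasSum f x

theorem HasAbsSum.add {f g : β → E} {x y : E} (hf : HasAbsSum f x) (hg : HasAbsSum g y) :
    HasAbsSum (fun b => f b + g b) (x + y) :=
  ⟨.of_nonneg_of_le (fun _ => norm_nonneg _) (fun _ => norm_add_le _ _) (hf.1.add hg.1),
    hf.2.add hg.2⟩

theorem HasAbsSum.finsetSum {ι : Type*} {s : Finset ι} {f : ι → β → E} {x : ι → E}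
    (h : ∀ i ∈ s, HasAbsSum (f i) (x i)) :
    HasAbsSum (fun b => ∑ i ∈ s, f i b) (∑ i ∈ s, x i) :=
  ⟨.of_nonneg_of_le (fun _ => norm_nonneg _) (fun _ => norm_sum_le _ _)
      (summable_sum fun i hi => (h i hi).1),
    hasSum_sum fun i hi => (h i hi).2⟩

theorem HasAbsSum.nat_add {f : ℕ → E} {x : E} (h : HasAbsSum f x) (k : ℕ) :
    HasAbsSum (fun n => f (n + k)) (x - ∑ n ∈ Finset.range k, f n) :=
  ⟨(summable_nat_add_iff k).2 h.1, (hasSum_nat_add_iff' k).2 h.2⟩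

theorem HasAbsSum.mul_left {R : Type*} [NormedRing R] {f : β → R} {x : R} (h : HasAbsSum f x)
    (c : R) : HasAbsSum (fun b => c * f b) (c * x) :=
  ⟨.of_nonneg_of_le (fun _ => norm_nonneg _) (fun _ => norm_mul_le _ _) (h.1.mul_left ‖c‖),
    h.2.mul_left c⟩

theorem HasAbsSum.mul {R : Type*} [NormedRing R] {f g : ℕ → R} {x y : R} (hf : HasAbsSum f x)
    (hg : HasAbsSum g y) :
    HasAbsSum (fun n => ∑ k ∈ Finset.range (n + 1), f k * g (n - k)) (x * y) := by
  refine ⟨summable_norm_sum_mul_range_of_summable_norm hf.1 hg.1, ?_⟩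
  simpa only [hf.2.tsum_eq, hg.2.tsum_eq] using
    hasSum_sum_range_mul_of_summable_norm' hf.1 hf.2.summable hg.1 hg.2.summable

end HasAbsSum

section PowerSeries

variable {𝕜 : Type*} [NormedField 𝕜]

theorem HasAbsSum.mul_powerSeries {a b : ℕ → 𝕜} {z x y : 𝕜}
    (ha : HasAbsSum (fun n => a n * z ^ n) x) (hb : HasAbsSum (fun n => b n * z ^ n) y) :
    HasAbsSum (fun n => (∑ k ∈ Finset.range (n + 1), a k * b (n - k)) * z ^ n) (x * y) := by
  convert ha.mul hb using 2 with n
  rw [Finset.sum_mul]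
  refine Finset.sum_congr rfl fun k hk => ?_
  rw [← pow_mul_pow_sub z (Finset.mem_range_succ_iff.1 hk)]
  ring

theorem HasAbsSum.powerSeries_nat_add {a : ℕ → 𝕜} {z x : 𝕜} (hz : z ≠ 0)
    (h : HasAbsSum (fun n => a n * z ^ n) x) (k : ℕ) :
    HasAbsSum (fun n => a (n + k) * z ^ n)
      ((z ^ k)⁻¹ * (x - ∑ n ∈ Finset.range k, a n * z ^ n)) := by
  convert (h.nat_add k).mul_left (z ^ k)⁻¹ using 2 with n
  rw [pow_add]
  field_simp

theorem HasAbsSum.laurentTail {a : ℕ → 𝕜} {z x : 𝕜} (hz : z ≠ 0) (ha : a 0 = 0)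
    (h : HasAbsSum (fun n => a n * z ^ n) x) (l : ℕ) :
    HasAbsSum (fun n => a (n + l + 1) * z ^ n)
      (z ^ (-(l + 1 : ℤ)) * x - ∑ n ∈ Finset.Icc 1 l, a n * z ^ ((n : ℤ) - l - 1)) := by
  convert h.powerSeries_nat_add hz (l + 1) using 1
  · rfl
  rw [Finset.sum_range_succ', ha, zero_mul, add_zero, mul_sub, Finset.mul_sum,
    ← Finset.Ico_add_one_right_eq_Icc, Finset.sum_Ico_eq_sum_range, Nat.add_sub_cancel,
    ← zpow_natCast z (l + 1), ← zpow_neg]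
  push_cast
  congr 1
  refine Finset.sum_congr rfl fun n _ => ?_
  rw [mul_left_comm, ← zpow_natCast, ← zpow_add₀ hz, add_comm 1 n]
  push_cast
  ring_nf

end PowerSeries

section Binomial

variable {𝕜 : Type*} [NormedField 𝕜]

theorem hasAbsSum_choose_mul_geometric [CompleteSpace 𝕜] {r : 𝕜} (hr : ‖r‖ < 1) (l : ℕ) :
    HasAbsSum (fun j => ((j + l).choose l : 𝕜) * r ^ j) (1 / (1 - r) ^ (l + 1)) := by
  refine ⟨.of_nonneg_of_le (fun _ => norm_nonneg _) (fun j => ?_)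
    (summable_choose_mul_geometric_of_norm_lt_one (R := ℝ) l (r := ‖r‖) (by simpa using hr)),
    hasSum_choose_mul_geometric_of_norm_lt_one l hr⟩
  rw [norm_mul, norm_pow]
  gcongr
  simpa using Nat.norm_cast_le (α := 𝕜) ((j + l).choose l)

theorem zpow_neg_natCast_add_one {K : Type*} [DivisionRing K] (u : K) (m : ℕ) :
    u ^ (-(m + 1 : ℤ)) = (u ^ (m + 1))⁻¹ := by
  rw [zpow_neg, ← Nat.cast_succ, zpow_natCast]

variable [CompleteSpace 𝕜] [CharZero 𝕜]

/-- The negative binomial series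
`(w + z)^{-(l+1)} = w^{-(l+1)} ∑ⱼ (j+l choose l) (-z/w)^j`, normalised as the expansion in `z` of
`-∂_w^l (w + z)⁻¹`. -/
theorem hasAbsSum_zpow_add {w z : 𝕜} (hz : ‖z‖ < ‖w‖) (l : ℕ) :
    HasAbsSum (fun j : ℕ => (-1) ^ (l + j + 1) * ((l + j).factorial / j.factorial : 𝕜) *
        w ^ (-(l + j + 1 : ℤ)) * z ^ j)
      ((-1) ^ (l + 1) * l.factorial * (w + z) ^ (-(l + 1 : ℤ))) := by
  have hw : w ≠ 0 := norm_pos_iff.1 ((norm_nonneg z).trans_lt hz)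
  have hr : ‖-(z / w)‖ < 1 := by rwa [norm_neg, norm_div, div_lt_one (norm_pos_iff.2 hw)]
  have hwz : w + z ≠ 0 := by
    rw [← norm_pos_iff]
    calc 0 < ‖w‖ - ‖z‖ := sub_pos.2 hz
      _ ≤ ‖w + z‖ := by simpa using norm_sub_norm_le w (-z)
  have hl : (l.factorial : 𝕜) ≠ 0 := Nat.cast_ne_zero.2 l.factorial_ne_zero
  convert (hasAbsSum_choose_mul_geometric hr l).mul_left
    ((-1) ^ (l + 1) * l.factorial * w ^ (-(l + 1 : ℤ))) using 1
  · ext j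
    have hj : (j.factorial : 𝕜) ≠ 0 := Nat.cast_ne_zero.2 j.factorial_ne_zero
    rw [Nat.cast_choose 𝕜 (Nat.le_add_left l j), Nat.add_sub_cancel, add_comm j l,
      ← Nat.cast_add, zpow_neg_natCast_add_one, zpow_neg_natCast_add_one, neg_pow (z / w),
      div_pow]
    field_simp
    ring
  · rw [zpow_neg_natCast_add_one, zpow_neg_natCast_add_one,
      show 1 - -(z / w) = (w + z) / w by field_simp; ring, div_pow]
    field_simp

end Binomial

section Taylor

variable {𝕜 : Type*} [NontriviallyNormedField 𝕜]

noncomputable def taylorCoeff (f : 𝕜 → 𝕜) (x : 𝕜) (n : ℕ) : 𝕜 :=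
  iteratedDeriv n f x / (Nat.factorial n : 𝕜)

variable [CompleteSpace 𝕜] [CharZero 𝕜]

theorem HasFPowerSeriesOnBall.apply_eq_taylorCoeff_mul_pow {f : 𝕜 → 𝕜}
    {p : FormalMultilinearSeries 𝕜 𝕜 𝕜} {x : 𝕜} {r : ENNReal}
    (hf : HasFPowerSeriesOnBall f p x r) (n : ℕ) (y : 𝕜) :
    p n (fun _ => y) = taylorCoeff f x n * y ^ n := by
  have h := hf.factorial_smul y n
  rw [iteratedFDeriv_apply_eq_iteratedDeriv_mul_prod, Finset.prod_const, Finset.card_univ,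
    Fintype.card_fin, nsmul_eq_mul, smul_eq_mul] at h
  rw [taylorCoeff, div_mul_eq_mul_div, eq_div_iff (Nat.cast_ne_zero.2 n.factorial_ne_zero),
    mul_comm, h, mul_comm]

theorem AnalyticAt.eventually_hasAbsSum_taylorCoeff {f : 𝕜 → 𝕜} {x : 𝕜}
    (hf : AnalyticAt 𝕜 f x) :
    ∀ᶠ y in 𝓝 0, HasAbsSum (fun n => taylorCoeff f x n * y ^ n) (f (x + y)) := by
  obtain ⟨p, r, hp⟩ := hf
  filter_upwards [Metric.eball_mem_nhds (0 : 𝕜) hp.r_pos] with y hy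
  simp only [← hp.apply_eq_taylorCoeff_mul_pow]
  exact ⟨p.summable_norm_apply (Metric.eball_subset_eball hp.r_le hy), hp.hasSum hy⟩

end Taylor

section Contributions

variable {𝕜 : Type*} [NontriviallyNormedField 𝕜] [CompleteSpace 𝕜] [CharZero 𝕜]
  {F : 𝕜 → 𝕜}

theorem AnalyticAt.eventually_hasAbsSum_mul_zpow_add (hF : AnalyticAt 𝕜 F 0) {w : 𝕜}
    (hw : w ≠ 0) (l : ℕ) :
    ∀ᶠ z in 𝓝 0, HasAbsSum (fun n => (∑ j ∈ Finset.range (n + 1),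
        (-1) ^ (l + j + 1) * ((l + j).factorial / j.factorial : 𝕜) * w ^ (-(l + j + 1 : ℤ)) *
          taylorCoeff F 0 (n - j)) * z ^ n)
      ((-1) ^ (l + 1) * l.factorial * (w + z) ^ (-(l + 1 : ℤ)) * F z) := by
  filter_upwards [hF.eventually_hasAbsSum_taylorCoeff,
    Metric.ball_mem_nhds (0 : 𝕜) (norm_pos_iff.2 hw)] with z hFz hz
  rw [zero_add] at hFz
  exact (hasAbsSum_zpow_add (by simpa using hz) l).mul_powerSeries hFz

theorem AnalyticAt.eventually_hasAbsSum_laurentTail (hF : AnalyticAt 𝕜 F 0) (hF0 : F 0 = 0)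
    (l : ℕ) :
    ∀ᶠ z in 𝓝 0, z ≠ 0 → HasAbsSum (fun n => taylorCoeff F 0 (n + l + 1) * z ^ n)
      (z ^ (-(l + 1 : ℤ)) * F z -
        ∑ n ∈ Finset.Icc 1 l, taylorCoeff F 0 n * z ^ ((n : ℤ) - l - 1)) := by
  filter_upwards [hF.eventually_hasAbsSum_taylorCoeff] with z hFz hz
  rw [zero_add] at hFz
  exact hFz.laurentTail hz (by simp [taylorCoeff, hF0]) l

end Contributions

section ZetaFunction

variable {I : Type*} [Fintype I] (D : ℕ) (d : I → ℂ) (l : I → ℕ)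

theorem zetaFn_sub_zetaFn (A B : ℂ → ℂ) (R S : I → ℂ → ℂ) (z : ℂ) :
    zetaFn D d l A R z - zetaFn D d l B S z =
      zetaFn D d l (fun w => A w - B w) (fun i w => R i w - S i w) z := by
  rw [zetaFn, zetaFn, zetaFn, add_sub_add_comm, ← Finset.sum_sub_distrib]
  simp only [mul_sub]

theorem eventually_hasAbsSum_laurentCoeff {A : ℂ → ℂ} {R : I → ℂ → ℂ} (hA : AnalyticAt ℂ A 0)
    (hR : ∀ i, AnalyticAt ℂ (R i) 0) (hR0 : ∀ i ∈ critSet D d, R i 0 = 0) :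
    ∀ᶠ z in 𝓝 0, z ≠ 0 → HasAbsSum (fun n => laurentCoeff D d l A R n * z ^ n)
      (zetaFn D d l A R z - ∑ i ∈ critSet D d, ∑ n ∈ Finset.Icc 1 (l i),
        (-1 : ℂ) ^ (l i + 1) * (l i).factorial * taylorCoeff (R i) 0 n *
          z ^ ((n : ℤ) - l i - 1)) := by
  have hw : ∀ i ∉ critSet D d, (D : ℂ) + d i + 1 ≠ 0 := fun i hi h =>
    hi (Finset.mem_filter.2 ⟨Finset.mem_univ i, by linear_combination h⟩)
  filter_upwards [hA.eventually_hasAbsSum_taylorCoeff,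
    (eventually_all_finset (Finset.univ \ critSet D d)).2 fun i hi =>
      (hR i).eventually_hasAbsSum_mul_zpow_add (hw i (Finset.mem_sdiff.1 hi).2) (l i),
    (eventually_all_finset (critSet D d)).2 fun i hi =>
      (hR i).eventually_hasAbsSum_laurentTail (hR0 i hi) (l i)] with z hAz hNC hC hz
  rw [zero_add] at hAz
  convert hAz.add ((HasAbsSum.finsetSum hNC).add
    (HasAbsSum.finsetSum fun i hi => (hC i hi hz).mul_left ((-1) ^ (l i + 1) * (l i).factorial)))
    using 1
  · ext n
    simp only [laurentCoeff, taylorCoeff, add_mul, Finset.sum_mul, mul_assoc, add_assoc]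
  · have hNC' : ∀ i ∈ Finset.univ \ critSet D d,
        (-1) ^ (l i + 1) * (l i).factorial * ((D : ℂ) + d i + z + 1) ^ (-(l i + 1 : ℤ)) *
          R i z =
        (-1) ^ (l i + 1) * (l i).factorial * ((D : ℂ) + d i + 1 + z) ^ (-(l i + 1 : ℤ)) *
          R i z :=
      fun i _ => by rw [add_right_comm _ z]
    have hC' : ∀ i ∈ critSet D d,
        (-1) ^ (l i + 1) * (l i).factorial * ((D : ℂ) + d i + z + 1) ^ (-(l i + 1 : ℤ)) *
          R i z =
        (-1) ^ (l i + 1) * (l i).factorial * (z ^ (-(l i + 1 : ℤ)) * R i z) :=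
      fun i hi => by rw [(Finset.mem_filter.1 hi).2, mul_assoc]; ring_nf
    rw [zetaFn, ← Finset.sum_sdiff (Finset.subset_univ (critSet D d)),
      Finset.sum_congr rfl hNC', Finset.sum_congr rfl hC']
    simp only [mul_sub, Finset.mul_sum, Finset.sum_sub_distrib, mul_assoc]
    ring

end ZetaFunction

theorem stmt_5_general {I : Type*} [Fintype I] (D : ℕ) (d : I → ℂ) (l : I → ℕ)
    (A B : ℂ → ℂ) (R S : I → ℂ → ℂ)
    (hA : AnalyticAt ℂ A 0) (hR : ∀ i, AnalyticAt ℂ (R i) 0)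
    (hB : AnalyticAt ℂ B 0) (hS : ∀ i, AnalyticAt ℂ (S i) 0)
    (hRS : ∀ i ∈ critSet D d, R i 0 = S i 0) :
    ∃ ε > 0, ∀ z : ℂ, 0 < ‖z‖ → ‖z‖ < ε →
      Summable (fun n : ℕ =>
        ‖laurentCoeff D d l (fun w => A w - B w) (fun i w => R i w - S i w) n * z ^ n‖) ∧
      zetaFn D d l A R z - zetaFn D d l B S z =
        (∑ i ∈ critSet D d, ∑ n ∈ Finset.Icc 1 (l i),
          (-1 : ℂ) ^ (l i + 1) * (Nat.factorial (l i) : ℂ) *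
            (iteratedDeriv n (fun w => R i w - S i w) 0 / (Nat.factorial n : ℂ)) *
            z ^ ((n : ℤ) - l i - 1)) +
        ∑' n : ℕ,
          laurentCoeff D d l (fun w => A w - B w) (fun i w => R i w - S i w) n * z ^ n := by
  obtain ⟨ε, hε, hexp⟩ := Metric.eventually_nhds_iff.1 <|
    eventually_hasAbsSum_laurentCoeff D d l (hA.fun_sub hB) (fun i => (hR i).fun_sub (hS i))
      (fun i hi => sub_eq_zero.2 (hRS i hi))
  refine ⟨ε, hε, fun z hz hzε => ?_⟩
  have h := hexp (by rwa [dist_zero_right]) (norm_pos_iff.1 hz)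
  refine ⟨h.1, ?_⟩
  rw [h.2.tsum_eq, zetaFn_sub_zetaFn]
  exact (add_sub_cancel _ _).symm

/-- Trace-defect formula: Laurent expansion at `0` of the difference of the ζ-functions of
two sets of finite gauged poly-log-homogeneous data sharing the same index set, degrees and
logarithmic orders, whose residues agree at `0` on the critical set. -/
theorem stmt_5 {I : Type*} [Fintype I] (D : ℕ) (d : I → ℂ) (l : I → ℕ)
    (hinj : Function.Injective fun i => (d i, l i))
    (A B : ℂ → ℂ) (R S : I → ℂ → ℂ)
    (hA : AnalyticAt ℂ A 0) (hR : ∀ i, AnalyticAt ℂ (R i) 0)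
    (hB : AnalyticAt ℂ B 0) (hS : ∀ i, AnalyticAt ℂ (S i) 0)
    (hRS : ∀ i ∈ critSet D d, R i 0 = S i 0) :
    ∃ ε > 0, ∀ z : ℂ, 0 < ‖z‖ → ‖z‖ < ε →
      Summable (fun n : ℕ =>
        ‖laurentCoeff D d l (fun w => A w - B w) (fun i w => R i w - S i w) n * z ^ n‖) ∧
      zetaFn D d l A R z - zetaFn D d l B S z =
        (∑ i ∈ critSet D d, ∑ n ∈ Finset.Icc 1 (l i),
          (-1 : ℂ) ^ (l i + 1) * (Nat.factorial (l i) : ℂ) *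
            (iteratedDeriv n (fun w => R i w - S i w) 0 / (Nat.factorial n : ℂ)) *
            z ^ ((n : ℤ) - l i - 1)) +
        ∑' n : ℕ,
          laurentCoeff D d l (fun w => A w - B w) (fun i w => R i w - S i w) n * z ^ n :=
  stmt_5_general D d l A B R S hA hR hB hS hRS
end

section
/- Let m, N ≥ 1, let U, V ⊆ ℝᵐ be open, χ : U → V a C¹ diffeomorphism, Θ : U → GL(ℝᴺ) a continuous map into the invertible linear endomorphisms of ℝᴺ, and b : V × (ℝᴺ∖{0}) → ℂ continuous such that b(y, ·) is homogeneous of degree −N for every y ∈ V. Define a : U × (ℝᴺ∖{0}) → ℂ by a(x, ξ) := |det Θ(x)|^{−1} · |det Dχ(x)| · b(χ(x), Θ(x)^{−1} ξ). Then for every continuous compactly supported φ : V → ℂ, both iterated integrals below are finite and ∫_U ∫_{S^{N−1}} a(x, ξ) φ(χ(x)) dσ(ξ) dx = ∫_V ∫_{S^{N−1}} b(y, ξ) φ(y) dσ(ξ) dy. -/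
/-!
Let `f` be continuous on `ℝᴺ ∖ {0}` and homogeneous of degree `-N`, let `A` be invertible and
`ψ` a bump supported in `(1, 2)`. In polar coordinates `ξ = r ω`, the Lebesgue integral of
`ψ (‖A ξ‖) f ξ` becomes `∫_{S^{N-1}} (∫₀^∞ ψ (‖A ω‖ r) dr / r) f ω dσ(ω)`, and since `dr / r` is
dilation invariant the inner integral does not depend on `‖A ω‖`. Hence
`∫_{ℝᴺ} ψ (‖A ξ‖) f ξ dξ = c_ψ ∫_{S^{N-1}} f dσ` with `c_ψ > 0` independent of `A`. Comparing
`A = 1` with the linear substitution `ξ ↦ A ξ` gives `∫_{S^{N-1}} f ∘ A = |det A|⁻¹ ∫_{S^{N-1}} f`.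
With `A = Θ(x)⁻¹` this cancels the factor `|det Θ(x)|⁻¹` of the pulled-back amplitude, and what
remains, `|det Dχ(x)|`, is the Jacobian of the change of variables `y = χ x`.
-/

open MeasureTheory

/-- The pulled-back amplitude `a(x,ξ) = |det Θ(x)|⁻¹ |det Dχ(x)| b(χ(x), Θ(x)⁻¹ξ)`. -/
noncomputable def pulledBackAmplitude {m N : ℕ}
    (χ : EuclideanSpace ℝ (Fin m) → EuclideanSpace ℝ (Fin m))
    (Θ : EuclideanSpace ℝ (Fin m) →
      (EuclideanSpace ℝ (Fin N) →L[ℝ] EuclideanSpace ℝ (Fin N)))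
    (b : EuclideanSpace ℝ (Fin m) → EuclideanSpace ℝ (Fin N) → ℂ)
    (x : EuclideanSpace ℝ (Fin m)) (ξ : EuclideanSpace ℝ (Fin N)) : ℂ :=
  ((|(Θ x).det|⁻¹ * |(fderiv ℝ χ x).det| : ℝ) : ℂ) * b (χ x) (Ring.inverse (Θ x) ξ)

open Set Metric

section Polar

variable {E F : Type*} [NormedAddCommGroup E] [NormedSpace ℝ E] [FiniteDimensional ℝ E]
  [MeasurableSpace E] [BorelSpace E] (μ : Measure E) [μ.IsAddHaarMeasure]
  [NormedAddCommGroup F] [NormedSpace ℝ F]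

theorem integral_volumeIoiPow (n : ℕ) (h : ℝ → F) :
    ∫ r, h r ∂(Measure.volumeIoiPow n) = ∫ r in Ioi (0 : ℝ), r ^ n • h r := by
  simp only [Measure.volumeIoiPow, ENNReal.ofReal]
  rw [integral_withDensity_eq_integral_smul (measurable_subtype_coe.pow_const _).real_toNNReal,
    integral_subtype_comap measurableSet_Ioi fun r => (r ^ n).toNNReal • h r]
  refine setIntegral_congr_fun measurableSet_Ioi fun r hr => ?_
  rw [NNReal.smul_def, Real.coe_toNNReal _ (pow_nonneg (le_of_lt hr) _)]

theorem integral_eq_integral_sphere_integral_Ioi [Nontrivial E] {g : E → F}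
    (hg : Integrable g μ) :
    ∫ x, g x ∂μ = ∫ ω : sphere (0 : E) 1,
      (∫ r in Ioi (0 : ℝ), r ^ (Module.finrank ℝ E - 1) • g (r • (ω : E))) ∂μ.toSphere := by
  have hmp := μ.measurePreserving_homeomorphUnitSphereProd
  set G : sphere (0 : E) 1 × Ioi (0 : ℝ) → F := fun p => g ((p.2 : ℝ) • (p.1 : E))
  have hG : ∀ x : ({0}ᶜ : Set E), G (homeomorphUnitSphereProd E x) = g x := fun x => by
    simp [G, smul_inv_smul₀ (norm_ne_zero_iff.2 x.2)]
  have hg' : Integrable (fun x : ({0}ᶜ : Set E) => g x) (μ.comap (↑)) :=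
    (integrableOn_iff_comap_subtypeVal (measurableSet_singleton 0).compl).mp hg.integrableOn
  have hGint : Integrable G (μ.toSphere.prod (.volumeIoiPow (Module.finrank ℝ E - 1))) := by
    rw [← hmp.integrable_comp_emb (Homeomorph.measurableEmbedding _)]
    simpa only [Function.comp_def, hG] using hg'
  calc ∫ x, g x ∂μ = ∫ x : ({0}ᶜ : Set E), g x ∂(μ.comap (↑)) := by
        rw [integral_subtype_comap (measurableSet_singleton _).compl, restrict_compl_singleton]
    _ = ∫ p, G p ∂(μ.toSphere.prod (.volumeIoiPow (Module.finrank ℝ E - 1))) := by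
        rw [← hmp.integral_comp (Homeomorph.measurableEmbedding _)]
        simp only [hG]
    _ = _ := by
        rw [integral_prod G hGint]
        exact integral_congr_ae (.of_forall fun ω => integral_volumeIoiPow _ fun r => g (r • ω))

end Polar

theorem integral_Ioi_comp_mul_div (h : ℝ → ℝ) {c : ℝ} (hc : 0 < c) :
    ∫ r in Ioi (0 : ℝ), h (c * r) / r = ∫ r in Ioi (0 : ℝ), h r / r := by
  have hcr : ∀ r ∈ Ioi (0 : ℝ), h (c * r) / r = c * (h (c * r) / (c * r)) := fun r hr => by
    field_simp [hc.ne', (mem_Ioi.mp hr).ne']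
  rw [setIntegral_congr_fun measurableSet_Ioi hcr, integral_const_mul,
    integral_comp_mul_left_Ioi (fun s => h s / s) 0 hc, mul_zero, smul_eq_mul,
    mul_inv_cancel_left₀ hc.ne']

noncomputable def tent (r : ℝ) : ℝ := max 0 (min (r - 1) (2 - r))

theorem continuous_tent : Continuous tent := by
  unfold tent; fun_prop

theorem tent_pos {r : ℝ} (hr : r ∈ Ioo 1 2) : 0 < tent r :=
  lt_max_of_lt_right (lt_min (by linarith [hr.1]) (by linarith [hr.2]))

theorem tent_eq_zero_of_notMem_Ioo {r : ℝ} (hr : r ∉ Ioo 1 2) : tent r = 0 := by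
  rw [mem_Ioo, not_and_or, not_lt, not_lt] at hr
  refine max_eq_left ?_
  rcases hr with hr | hr
  · exact (min_le_left _ _).trans (by linarith)
  · exact (min_le_right _ _).trans (by linarith)

noncomputable def tentConst : ℝ := ∫ r in Ioi (0 : ℝ), tent r / r

theorem tentConst_pos : 0 < tentConst := by
  have hIoo : ∀ r ∈ Ioo (1 : ℝ) 2, 0 < tent r / r := fun r hr =>
    div_pos (tent_pos hr) (by linarith [hr.1])
  have hsupp : ∀ r ∈ Ioi (0 : ℝ) \ Ioc 1 2, tent r / r = 0 := fun r hr => by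
    rw [tent_eq_zero_of_notMem_Ioo fun h => hr.2 (Ioo_subset_Ioc_self h), zero_div]
  rw [tentConst, setIntegral_eq_of_subset_of_forall_sdiff_eq_zero measurableSet_Ioi
    (fun r hr => mem_Ioi.mpr (zero_lt_one.trans hr.1)) hsupp,
    ← intervalIntegral.integral_of_le one_le_two]
  refine intervalIntegral.intervalIntegral_pos_of_pos_on ?_ hIoo one_lt_two
  exact (continuous_tent.continuousOn.div continuousOn_id fun r hr => by
    rw [uIcc_of_le one_le_two] at hr; exact (zero_lt_one.trans_le hr.1).ne').intervalIntegrable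

section Homogeneous

variable {E F : Type*} [NormedAddCommGroup E] [NormedSpace ℝ E]
  [NormedAddCommGroup F] [NormedSpace ℝ F] {f : E → F}

def IsPosHomogeneous (f : E → F) (d : ℤ) : Prop :=
  ∀ t : ℝ, 0 < t → ∀ ξ : E, ξ ≠ 0 → f (t • ξ) = t ^ d • f ξ

open Topology in
theorem continuous_tent_norm_smul (A : E ≃L[ℝ] E) (hf : ContinuousOn f {0}ᶜ) :
    Continuous fun ξ => tent ‖A ξ‖ • f ξ := by
  refine continuous_iff_continuousAt.mpr fun ξ => ?_
  rcases eq_or_ne ξ 0 with rfl | hξ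
  · have hsmall : ∀ᶠ η in 𝓝 (0 : E), ‖A η‖ < 1 :=
      (A.continuous.norm.tendsto' 0 0 (by simp)).eventually (gt_mem_nhds one_pos)
    refine (continuousAt_const (y := (0 : F))).congr (hsmall.mono fun η hη => ?_)
    show 0 = tent ‖A η‖ • f η
    rw [tent_eq_zero_of_notMem_Ioo fun h => by linarith [h.1], zero_smul]
  · exact (continuous_tent.comp A.continuous.norm).continuousAt.smul
      (hf.continuousAt (isOpen_compl_singleton.mem_nhds hξ))

variable [FiniteDimensional ℝ E]

theorem hasCompactSupport_tent_norm_smul (A : E ≃L[ℝ] E) (f : E → F) :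
    HasCompactSupport fun ξ => tent ‖A ξ‖ • f ξ := by
  refine HasCompactSupport.intro
    (A.toHomeomorph.isCompact_preimage.mpr (isCompact_closedBall (0 : E) 2)) fun ξ hξ => ?_
  have hξ' : 2 < ‖A ξ‖ := by simpa using hξ
  rw [tent_eq_zero_of_notMem_Ioo fun h => by linarith [h.2], zero_smul]

theorem integral_Ioi_pow_smul_tent_norm_smul [CompleteSpace F] [Nontrivial E] (A : E ≃L[ℝ] E)
    (hhom : IsPosHomogeneous f (-Module.finrank ℝ E))
    {ω : E} (hω : ω ≠ 0) :
    ∫ r in Ioi (0 : ℝ), r ^ (Module.finrank ℝ E - 1) • (tent ‖A (r • ω)‖ • f (r • ω)) =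
      tentConst • f ω := by
  obtain ⟨k, hk⟩ := Nat.exists_eq_add_one.mpr (Module.finrank_pos (R := ℝ) (M := E))
  rw [hk] at hhom ⊢
  rw [Nat.add_sub_cancel]
  have hradial : ∀ r ∈ Ioi (0 : ℝ), r ^ k • (tent ‖A (r • ω)‖ • f (r • ω)) =
      (tent (‖A ω‖ * r) / r) • f ω := fun r hr => by
    have hr : 0 < r := hr
    rw [hhom r hr ω hω, map_smul, norm_smul, Real.norm_of_nonneg hr.le, smul_smul, smul_smul,
      zpow_neg, zpow_natCast, mul_comm r]
    congr 1
    field_simp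
    ring
  rw [setIntegral_congr_fun measurableSet_Ioi hradial, integral_smul_const,
    integral_Ioi_comp_mul_div tent (c := ‖A ω‖) (norm_pos_iff.mpr (by simpa using hω)), tentConst]

variable [MeasurableSpace E] [BorelSpace E] (μ : Measure E) [μ.IsAddHaarMeasure]

theorem integral_tent_norm_smul_eq_integral_sphere [CompleteSpace F] [Nontrivial E]
    (A : E ≃L[ℝ] E) (hf : ContinuousOn f {0}ᶜ)
    (hhom : IsPosHomogeneous f (-Module.finrank ℝ E)) :
    ∫ ξ, tent ‖A ξ‖ • f ξ ∂μ = tentConst • ∫ ω : sphere (0 : E) 1, f ω ∂μ.toSphere := by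
  rw [integral_eq_integral_sphere_integral_Ioi μ ((continuous_tent_norm_smul A hf)
    |>.integrable_of_hasCompactSupport (hasCompactSupport_tent_norm_smul A f)), ← integral_smul]
  exact integral_congr_ae (.of_forall fun ω =>
    integral_Ioi_pow_smul_tent_norm_smul A hhom (ne_of_mem_sphere ω.2 one_ne_zero))

theorem integral_comp_continuousLinearEquiv (A : E ≃L[ℝ] E) (g : E → F) :
    ∫ ξ, g (A ξ) ∂μ = |(A : E →L[ℝ] E).det|⁻¹ • ∫ ξ, g ξ ∂μ := by
  have hmap : Measure.map A μ = ENNReal.ofReal |((A : E →L[ℝ] E).det)⁻¹| • μ :=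
    Measure.map_linearMap_addHaar_eq_smul_addHaar μ A.toLinearEquiv.isUnit_det'.ne_zero
  calc ∫ ξ, g (A ξ) ∂μ = ∫ ξ, g ξ ∂(Measure.map A μ) :=
        (A.toHomeomorph.measurableEmbedding.integral_map g).symm
    _ = _ := by
      rw [hmap, integral_smul_measure, ENNReal.toReal_ofReal (abs_nonneg _), abs_inv]

theorem integral_sphere_comp_continuousLinearEquiv [CompleteSpace F] [Nontrivial E]
    (A : E ≃L[ℝ] E) (hf : ContinuousOn f {0}ᶜ) (hhom : IsPosHomogeneous f (-Module.finrank ℝ E)) :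
    ∫ ω : sphere (0 : E) 1, f (A ω) ∂μ.toSphere =
      |(A : E →L[ℝ] E).det|⁻¹ • ∫ ω : sphere (0 : E) 1, f ω ∂μ.toSphere := by
  have hfA : ContinuousOn (fun ξ => f (A ξ)) {0}ᶜ :=
    hf.comp A.continuous.continuousOn fun ξ hξ => A.map_ne_zero_iff.mpr hξ
  have hhomA : IsPosHomogeneous (fun ξ => f (A ξ)) (-Module.finrank ℝ E) := fun t ht ξ hξ =>
    (congrArg f (map_smul A t ξ)).trans (hhom t ht _ (A.map_ne_zero_iff.mpr hξ))
  refine smul_right_injective F tentConst_pos.ne' ?_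
  calc tentConst • ∫ ω : sphere (0 : E) 1, f (A ω) ∂μ.toSphere
      = ∫ ξ, tent ‖ξ‖ • f (A ξ) ∂μ :=
        (integral_tent_norm_smul_eq_integral_sphere μ (.refl ℝ E) hfA hhomA).symm
    _ = ∫ ξ, tent ‖A.symm (A ξ)‖ • f (A ξ) ∂μ := by simp only [A.symm_apply_apply]
    _ = |(A : E →L[ℝ] E).det|⁻¹ • ∫ ξ, tent ‖A.symm ξ‖ • f ξ ∂μ :=
        integral_comp_continuousLinearEquiv μ A fun ξ => tent ‖A.symm ξ‖ • f ξ
    _ = tentConst • |(A : E →L[ℝ] E).det|⁻¹ • ∫ ω : sphere (0 : E) 1, f ω ∂μ.toSphere := by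
        rw [integral_tent_norm_smul_eq_integral_sphere μ A.symm hf hhom, smul_comm]

theorem integral_sphere_comp_ringInverse [CompleteSpace F] [Nontrivial E] {T : E →L[ℝ] E}
    (hT : IsUnit T) (hf : ContinuousOn f {0}ᶜ)
    (hhom : IsPosHomogeneous f (-Module.finrank ℝ E)) :
    ∫ ω : sphere (0 : E) 1, f (Ring.inverse T ω) ∂μ.toSphere =
      |T.det| • ∫ ω : sphere (0 : E) 1, f ω ∂μ.toSphere := by
  obtain ⟨u, rfl⟩ := hT
  set A := ContinuousLinearEquiv.unitsEquiv ℝ E u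
  have hinv : Ring.inverse (u : E →L[ℝ] E) = (A.symm : E →L[ℝ] E) := Ring.inverse_unit u
  have hdet : (A.symm : E →L[ℝ] E).det = (u : E →L[ℝ] E).det⁻¹ := A.det_coe_symm
  rw [hinv, ← inv_inv |(u : E →L[ℝ] E).det|, ← abs_inv, ← hdet]
  exact integral_sphere_comp_continuousLinearEquiv μ A.symm hf hhom

theorem continuousOn_integral_sphere {X : Type*} [TopologicalSpace X] [LocallyCompactSpace X]
    [FirstCountableTopology X] {V : Set X} (hV : IsOpen V) {b : X → E → F}
    (hb : ContinuousOn (fun p : X × E => b p.1 p.2) (V ×ˢ {0}ᶜ))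
    (ν : Measure (sphere (0 : E) 1)) [IsFiniteMeasure ν] :
    ContinuousOn (fun y => ∫ ω, b y ω ∂ν) V := by
  rw [continuousOn_iff_continuous_domRestrict]
  have := hV.locallyCompactSpace
  have hcont : Continuous (Function.uncurry fun (y : V) (ω : sphere (0 : E) 1) => b y ω) :=
    hb.comp_continuous (f := fun p : V × sphere (0 : E) 1 => ((p.1 : X), (p.2 : E))) (by fun_prop)
      fun p => ⟨p.1.2, ne_of_mem_sphere p.2.2 one_ne_zero⟩
  exact (continuous_parametric_integral_of_continuous (μ := ν) hcont isCompact_univ).congr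
    fun y => by simp

end Homogeneous

theorem integral_sphere_pulledBackAmplitude {m N : ℕ} (hN : 1 ≤ N)
    (χ : EuclideanSpace ℝ (Fin m) → EuclideanSpace ℝ (Fin m))
    (Θ : EuclideanSpace ℝ (Fin m) →
      (EuclideanSpace ℝ (Fin N) →L[ℝ] EuclideanSpace ℝ (Fin N)))
    (b : EuclideanSpace ℝ (Fin m) → EuclideanSpace ℝ (Fin N) → ℂ) {x : EuclideanSpace ℝ (Fin m)}
    (hΘ : IsUnit (Θ x)) (hb : ContinuousOn (b (χ x)) {0}ᶜ)
    (hhom : ∀ t : ℝ, 0 < t → ∀ ξ : EuclideanSpace ℝ (Fin N), ξ ≠ 0 →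
      b (χ x) (t • ξ) = ((t ^ (-(N : ℤ)) : ℝ) : ℂ) * b (χ x) ξ) :
    ∫ ω : sphere (0 : EuclideanSpace ℝ (Fin N)) 1, pulledBackAmplitude χ Θ b x ω
        ∂(volume : Measure (EuclideanSpace ℝ (Fin N))).toSphere =
      |(fderiv ℝ χ x).det| • ∫ ω : sphere (0 : EuclideanSpace ℝ (Fin N)) 1, b (χ x) ω
        ∂(volume : Measure (EuclideanSpace ℝ (Fin N))).toSphere := by
  have : NeZero N := ⟨by omega⟩
  have hhom' : IsPosHomogeneous (b (χ x)) (-Module.finrank ℝ (EuclideanSpace ℝ (Fin N))) := by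
    simpa only [IsPosHomogeneous, finrank_euclideanSpace_fin, Complex.real_smul] using hhom
  have hdet : (Θ x).det ≠ 0 := by
    obtain ⟨u, hu⟩ := hΘ
    rw [← hu]
    exact (ContinuousLinearEquiv.unitsEquiv ℝ _ u).toLinearEquiv.isUnit_det'.ne_zero
  simp only [pulledBackAmplitude, integral_const_mul]
  rw [integral_sphere_comp_ringInverse _ hΘ hb hhom', Complex.real_smul, Complex.real_smul]
  have : ((|(Θ x).det| : ℝ) : ℂ) ≠ 0 := by simpa using hdet
  push_cast
  field_simp

theorem stmt_8_general (m N : ℕ) (hN : 1 ≤ N)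
    (U V : Set (EuclideanSpace ℝ (Fin m))) (hU : IsOpen U) (hV : IsOpen V)
    (χ : EuclideanSpace ℝ (Fin m) → EuclideanSpace ℝ (Fin m))
    (hχ : ContDiffOn ℝ 1 χ U) (hχbij : Set.BijOn χ U V)
    (Θ : EuclideanSpace ℝ (Fin m) →
      (EuclideanSpace ℝ (Fin N) →L[ℝ] EuclideanSpace ℝ (Fin N)))
    (hΘinv : ∀ x ∈ U, IsUnit (Θ x))
    (b : EuclideanSpace ℝ (Fin m) → EuclideanSpace ℝ (Fin N) → ℂ)
    (hbcont : ContinuousOn (fun p => b p.1 p.2)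
      (V ×ˢ ({(0 : EuclideanSpace ℝ (Fin N))}ᶜ)))
    (hbhom : ∀ y ∈ V, ∀ t : ℝ, 0 < t → ∀ ξ : EuclideanSpace ℝ (Fin N), ξ ≠ 0 →
      b y (t • ξ) = ((t ^ (-(N : ℤ)) : ℝ) : ℂ) * b y ξ)
    (φ : EuclideanSpace ℝ (Fin m) → ℂ)
    (hφcont : Continuous φ) (hφsupp : HasCompactSupport φ)
    (hφV : tsupport φ ⊆ V) :
    IntegrableOn (fun x =>
        ∫ ξ : Metric.sphere (0 : EuclideanSpace ℝ (Fin N)) 1,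
          pulledBackAmplitude χ Θ b x (ξ : EuclideanSpace ℝ (Fin N)) * φ (χ x)
          ∂(volume : Measure (EuclideanSpace ℝ (Fin N))).toSphere) U volume ∧
      IntegrableOn (fun y =>
        ∫ ξ : Metric.sphere (0 : EuclideanSpace ℝ (Fin N)) 1,
          b y (ξ : EuclideanSpace ℝ (Fin N)) * φ y
          ∂(volume : Measure (EuclideanSpace ℝ (Fin N))).toSphere) V volume ∧
      (∫ x in U,
        ∫ ξ : Metric.sphere (0 : EuclideanSpace ℝ (Fin N)) 1,
          pulledBackAmplitude χ Θ b x (ξ : EuclideanSpace ℝ (Fin N)) * φ (χ x)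
          ∂(volume : Measure (EuclideanSpace ℝ (Fin N))).toSphere) =
      ∫ y in V,
        ∫ ξ : Metric.sphere (0 : EuclideanSpace ℝ (Fin N)) 1,
          b y (ξ : EuclideanSpace ℝ (Fin N)) * φ y
          ∂(volume : Measure (EuclideanSpace ℝ (Fin N))).toSphere := by
  set σ := (volume : Measure (EuclideanSpace ℝ (Fin N))).toSphere
  set g : EuclideanSpace ℝ (Fin m) → ℂ := fun y =>
    (∫ ω : sphere (0 : EuclideanSpace ℝ (Fin N)) 1, b y ω ∂σ) * φ y
  have hg : IntegrableOn g V :=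
    (((continuousOn_integral_sphere hV hbcont σ).mul hφcont.continuousOn).mono hφV
      |>.integrableOn_compact hφsupp).of_forall_sdiff_eq_zero hV.measurableSet
      fun y hy => by simp [image_eq_zero_of_notMem_tsupport hy.2]
  have hpullback : ∀ x ∈ U, (∫ ω : sphere (0 : EuclideanSpace ℝ (Fin N)) 1,
      pulledBackAmplitude χ Θ b x ω ∂σ) * φ (χ x) = |(fderiv ℝ χ x).det| • g (χ x) := by
    intro x hx
    have hy := hχbij.mapsTo hx
    rw [integral_sphere_pulledBackAmplitude hN χ Θ b (hΘinv x hx)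
      (hbcont.comp (Continuous.prodMk_right _).continuousOn fun ξ hξ => ⟨hy, hξ⟩)
      (hbhom _ hy), smul_mul_assoc]
  have hderiv : ∀ x ∈ U, HasFDerivWithinAt χ (fderiv ℝ χ x) U x := fun x hx =>
    ((hχ.differentiableOn one_ne_zero x hx).differentiableAt
      (hU.mem_nhds hx)).hasFDerivAt.hasFDerivWithinAt
  simp only [integral_mul_const]
  refine ⟨?_, hg, ?_⟩
  · rw [integrableOn_congr_fun hpullback hU.measurableSet,
      ← integrableOn_image_iff_integrableOn_abs_det_fderiv_smul volume hU.measurableSet hderiv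
        hχbij.injOn, hχbij.image_eq]
    exact hg
  · rw [setIntegral_congr_fun hU.measurableSet hpullback,
      ← integral_image_eq_integral_abs_det_fderiv_smul volume hU.measurableSet hderiv
        hχbij.injOn, hχbij.image_eq]

/-- Form-invariance of the spherical residue integral under a `C¹` change of coordinates
`χ` with fibrewise linear change of covariables `Θ(x)`, for amplitudes homogeneous of
degree `−N` in the covariable. -/
theorem stmt_8 (m N : ℕ) (hm : 1 ≤ m) (hN : 1 ≤ N)
    (U V : Set (EuclideanSpace ℝ (Fin m))) (hU : IsOpen U) (hV : IsOpen V)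
    (χ : EuclideanSpace ℝ (Fin m) → EuclideanSpace ℝ (Fin m))
    (hχ : ContDiffOn ℝ 1 χ U) (hχbij : Set.BijOn χ U V)
    (hχder : ∀ x ∈ U, (fderiv ℝ χ x).det ≠ 0)
    (Θ : EuclideanSpace ℝ (Fin m) →
      (EuclideanSpace ℝ (Fin N) →L[ℝ] EuclideanSpace ℝ (Fin N)))
    (hΘcont : ContinuousOn Θ U) (hΘinv : ∀ x ∈ U, IsUnit (Θ x))
    (b : EuclideanSpace ℝ (Fin m) → EuclideanSpace ℝ (Fin N) → ℂ)
    (hbcont : ContinuousOn (fun p => b p.1 p.2)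
      (V ×ˢ ({(0 : EuclideanSpace ℝ (Fin N))}ᶜ)))
    (hbhom : ∀ y ∈ V, ∀ t : ℝ, 0 < t → ∀ ξ : EuclideanSpace ℝ (Fin N), ξ ≠ 0 →
      b y (t • ξ) = ((t ^ (-(N : ℤ)) : ℝ) : ℂ) * b y ξ)
    (φ : EuclideanSpace ℝ (Fin m) → ℂ)
    (hφcont : Continuous φ) (hφsupp : HasCompactSupport φ)
    (hφV : tsupport φ ⊆ V) :
    IntegrableOn (fun x =>
        ∫ ξ : Metric.sphere (0 : EuclideanSpace ℝ (Fin N)) 1,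
          pulledBackAmplitude χ Θ b x (ξ : EuclideanSpace ℝ (Fin N)) * φ (χ x)
          ∂(volume : Measure (EuclideanSpace ℝ (Fin N))).toSphere) U volume ∧
      IntegrableOn (fun y =>
        ∫ ξ : Metric.sphere (0 : EuclideanSpace ℝ (Fin N)) 1,
          b y (ξ : EuclideanSpace ℝ (Fin N)) * φ y
          ∂(volume : Measure (EuclideanSpace ℝ (Fin N))).toSphere) V volume ∧
      (∫ x in U,
        ∫ ξ : Metric.sphere (0 : EuclideanSpace ℝ (Fin N)) 1,
          pulledBackAmplitude χ Θ b x (ξ : EuclideanSpace ℝ (Fin N)) * φ (χ x)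
          ∂(volume : Measure (EuclideanSpace ℝ (Fin N))).toSphere) =
      ∫ y in V,
        ∫ ξ : Metric.sphere (0 : EuclideanSpace ℝ (Fin N)) 1,
          b y (ξ : EuclideanSpace ℝ (Fin N)) * φ y
          ∂(volume : Measure (EuclideanSpace ℝ (Fin N))).toSphere :=
  stmt_8_general m N hN U V hU hV χ hχ hχbij Θ hΘinv b hbcont hbhom φ hφcont hφsupp hφV
end
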